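/- arXiv:2509.14774 — 2 statements merged into one kernel-verified Lean document; each statement's English description precedes it below -/
import Mathlib

section
/- The right derived functors of the inverse-limit functor on ℕ-indexed inverse systems of abelian groups vanish in all degrees i ≥ 2: for every inverse system (Aₙ) of abelian groups indexed by ℕ, Rⁱ lim (Aₙ) = 0 for i ≥ 2. -/
open CategoryTheory CategoryTheory.Limits

instance : (lim : (ℕᵒᵖ ⥤ AddCommGrpCat.{0}) ⥤ AddCommGrpCat.{0}).Additive where
  map_add {F G f g} := by
    apply limit.hom_ext
    intro j
    simp [Preadditive.add_comp, Preadditive.comp_add]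

/-!
Every inverse system `J` embeds into `m ↦ ∏_{k ≤ m} J k`, whose transition maps are
projections; an injective `J` is a retract of it, so its transition maps are surjective.

Compute `Rⁱ lim F` from an injective resolution `I`. A cocycle `x ∈ lim Iⁱ` with `i ≥ 2` is
levelwise a coboundary `xₙ = d aₙ`. Given a lift `aₙ` of `xₙ`, any lift `b` of `xₙ₊₁` restricts
to `aₙ` up to `d wₙ` with `wₙ ∈ Iⁱ⁻²ₙ`; lifting `wₙ` to `Iⁱ⁻²ₙ₊₁` and correcting `b` gives a lift
of `xₙ₊₁` restricting to `aₙ`. Inductively this yields `a ∈ lim Iⁱ⁻¹` with `d a = x`.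
-/

open Opposite

universe u

namespace AddCommGrpCat

section Injective

variable {ι : Type u} [Preorder ι] (J : ιᵒᵖ ⥤ AddCommGrpCat.{u})

noncomputable def coinduced : ιᵒᵖ ⥤ AddCommGrpCat.{u} where
  obj m := AddCommGrpCat.of (∀ k : {k : ι // k ≤ m.unop}, J.obj (op k.1))
  map f := AddCommGrpCat.ofHom
    { toFun := fun x k => x ⟨k.1, k.2.trans (leOfHom f.unop)⟩
      map_zero' := rfl
      map_add' := fun _ _ => rfl }

noncomputable def toCoinduced : J ⟶ coinduced J where
  app m := AddCommGrpCat.ofHom <| AddMonoidHom.pi fun k => (J.map (homOfLE k.2).op).hom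
  naturality m m' f := by
    ext a
    funext k
    show J.map _ (J.map f a) = J.map _ a
    rw [← ConcreteCategory.comp_apply, ← J.map_comp]
    rfl

lemma toCoinduced_app_apply_self (m : ιᵒᵖ) (a : J.obj m) :
    (toCoinduced J).app m a ⟨m.unop, le_rfl⟩ = a := by
  show J.map (𝟙 m) a = a
  rw [J.map_id]
  rfl

instance : Mono (toCoinduced J) :=
  have (m : ιᵒᵖ) : Mono ((toCoinduced J).app m) :=
    (AddCommGrpCat.mono_iff_injective _).2 fun a b h => by
      rw [← toCoinduced_app_apply_self J m a, ← toCoinduced_app_apply_self J m b, h]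
  NatTrans.mono_of_mono_app _

lemma coinduced_map_surjective {m m' : ιᵒᵖ} (f : m ⟶ m') :
    Function.Surjective ((coinduced J).map f) := by
  classical
  exact fun y => ⟨fun k => if h : k.1 ≤ m'.unop then y ⟨k.1, h⟩ else 0, funext fun k => dif_pos k.2⟩

lemma map_surjective_of_injective [Injective J] {m m' : ιᵒᵖ} (f : m ⟶ m') :
    Function.Surjective (J.map f) := by
  set r : coinduced J ⟶ J := Injective.factorThru (𝟙 J) (toCoinduced J)
  have hr : toCoinduced J ≫ r = 𝟙 J := Injective.comp_factorThru _ _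
  intro a
  obtain ⟨b, hb⟩ := coinduced_map_surjective J f ((toCoinduced J).app m' a)
  refine ⟨r.app m b, ?_⟩
  rw [← ConcreteCategory.comp_apply, ← r.naturality, ConcreteCategory.comp_apply, hb,
    ← ConcreteCategory.comp_apply, ← NatTrans.comp_app, hr]
  rfl

end Injective

section Fiber

variable {A B : ℕᵒᵖ ⥤ AddCommGrpCat.{u}} (f : A ⟶ B) (x : ↑(limit B))

noncomputable def fiber : ℕᵒᵖ ⥤ Type u where
  obj n := {a : A.obj n // f.app n a = limit.π B n x}
  map φ := TypeCat.ofHom fun a => ⟨A.map φ a.1, by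
    rw [← ConcreteCategory.comp_apply, f.naturality, ConcreteCategory.comp_apply, a.2,
      ← ConcreteCategory.comp_apply, limit.w]⟩

lemma exists_limMap_eq_of_fiber_map_surjective (h₀ : Nonempty ((fiber f x).obj (op 0)))
    (hsurj : ∀ n : ℕ, Function.Surjective ((fiber f x).map (homOfLE n.le_succ).op)) :
    ∃ y, limMap f y = x := by
  obtain ⟨a₀⟩ := h₀
  obtain ⟨s, -⟩ := Types.surjective_π_app_zero_of_surjective_map
    (Types.limitConeIsLimit (fiber f x)) hsurj a₀
  let hA := isLimitOfPreserves (forget AddCommGrpCat.{u}) (limit.isLimit A)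
  let y := (Types.isLimitEquivSections hA).symm
    ⟨fun n => (s.1 n).1, fun φ => congrArg Subtype.val (s.2 φ)⟩
  refine ⟨y, Concrete.limit_ext _ _ _ fun n => ?_⟩
  have hy : limit.π A n y = (s.1 n).1 := by
    simpa using Types.isLimitEquivSections_symm_apply hA _ n
  rw [← ConcreteCategory.comp_apply, limMap_π, ConcreteCategory.comp_apply, hy]
  exact (s.1 n).2

end Fiber

lemma _root_.CategoryTheory.ShortComplex.Exact.exists_app_eq {J : Type*} [Category J]
    {S : ShortComplex (J ⥤ AddCommGrpCat.{u})} (hS : S.Exact) (j : J) (b : S.X₂.obj j)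
    (hb : S.g.app j b = 0) : ∃ a, S.f.app j a = b :=
  (ShortComplex.ab_exact_iff _).1 (hS.map ((evaluation J AddCommGrpCat.{u}).obj j)) b hb

variable {S : ShortComplex (ℕᵒᵖ ⥤ AddCommGrpCat.{u})}

lemma fiber_map_surjective (hS : S.Exact)
    (hX₁ : ∀ n : ℕ, Function.Surjective (S.X₁.map (homOfLE n.le_succ).op))
    (x : ↑(limit S.X₃)) (hx : ∀ n, ∃ a, S.g.app n a = limit.π S.X₃ n x) (n : ℕ) :
    Function.Surjective ((fiber S.g x).map (homOfLE n.le_succ).op) := by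
  rintro ⟨a, ha⟩
  obtain ⟨b, hb⟩ := hx (op (n + 1))
  set t : op (n + 1) ⟶ op n := (homOfLE n.le_succ).op
  have hdiff : S.g.app _ (S.X₂.map t b - a) = 0 := by
    rw [map_sub, ← ConcreteCategory.comp_apply, S.g.naturality, ConcreteCategory.comp_apply, hb,
      ← ConcreteCategory.comp_apply, limit.w, ha, sub_self]
  obtain ⟨w, hw⟩ := hS.exists_app_eq _ _ hdiff
  obtain ⟨w', rfl⟩ := hX₁ n w
  refine ⟨⟨b - S.f.app _ w', ?_⟩, Subtype.ext ?_⟩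
  · rw [map_sub, hb, ← ConcreteCategory.comp_apply, ← NatTrans.comp_app, S.zero]
    simp
  · show S.X₂.map t (b - S.f.app _ w') = a
    rw [map_sub, ← ConcreteCategory.comp_apply, ← S.f.naturality, ConcreteCategory.comp_apply, hw]
    abel

lemma exists_limMap_eq_of_exact (hS : S.Exact)
    (hX₁ : ∀ n : ℕ, Function.Surjective (S.X₁.map (homOfLE n.le_succ).op))
    (x : ↑(limit S.X₃)) (hx : ∀ n, ∃ a, S.g.app n a = limit.π S.X₃ n x) :
    ∃ y, limMap S.g y = x :=
  have ⟨a, ha⟩ := hx (op 0)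
  exists_limMap_eq_of_fiber_map_surjective S.g x ⟨⟨a, ha⟩⟩ (fiber_map_surjective hS hX₁ x hx)

end AddCommGrpCat

lemma CochainComplex.exactAt_lim_mapHomologicalComplex
    (K : CochainComplex (ℕᵒᵖ ⥤ AddCommGrpCat.{u}) ℕ) (k : ℕ)
    (hK : ∀ n : ℕ, Function.Surjective ((K.X k).map (homOfLE n.le_succ).op))
    (h₁ : (K.sc' k (k + 1) (k + 2)).Exact) (h₂ : (K.sc' (k + 1) (k + 2) (k + 3)).Exact) :
    ((lim.mapHomologicalComplex _).obj K).ExactAt (k + 2) := by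
  rw [HomologicalComplex.exactAt_iff' _ (k + 1) (k + 2) (k + 3) (by simp) (by simp),
    ShortComplex.ab_exact_iff]
  intro (x : ↑(limit (K.X (k + 2)))) (hx : limMap (K.d (k + 2) (k + 3)) x = 0)
  refine AddCommGrpCat.exists_limMap_eq_of_exact h₁ hK x fun n => h₂.exists_app_eq n _ ?_
  show (K.d (k + 2) (k + 3)).app n (limit.π (K.X (k + 2)) n x) = 0
  rw [← ConcreteCategory.comp_apply, ← limMap_π, ConcreteCategory.comp_apply, hx, map_zero]

/-- The right derived functors of the inverse-limit functor on ℕ-indexed inverse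
systems of abelian groups vanish in degrees `i ≥ 2`. -/
theorem rightDerived_lim_vanishes_of_ge_two
    [EnoughInjectives (ℕᵒᵖ ⥤ AddCommGrpCat.{0})]
    (F : ℕᵒᵖ ⥤ AddCommGrpCat.{0}) (i : ℕ) (hi : 2 ≤ i) :
    IsZero
      (((lim : (ℕᵒᵖ ⥤ AddCommGrpCat.{0}) ⥤ AddCommGrpCat.{0}).rightDerived i).obj F) := by
  obtain ⟨j, rfl⟩ := Nat.exists_eq_add_of_le' hi
  obtain ⟨I⟩ := HasInjectiveResolution.out (Z := F)
  refine IsZero.of_iso ?_ (I.isoRightDerivedObj lim (j + 2))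
  rw [HomologicalComplex.homologyFunctor_obj, ← HomologicalComplex.exactAt_iff_isZero_homology]
  exact I.cocomplex.exactAt_lim_mapHomologicalComplex j
    (fun _ => AddCommGrpCat.map_surjective_of_injective _ _)
    (I.exact_succ j) (I.exact_succ (j + 1))
end

section
/- Let C be a triangulated category with a weight structure and let f : x → y be a morphism and k an integer. The following are equivalent: (1) f factors as x → x' → y with x' ∈ C_{w≥k+1}; (2) there exists a weight decomposition w_{≤k}x → x → w_{≥k+1}x (a distinguished triangle with w_{≤k}x ∈ C_{w≤k} and w_{≥k+1}x ∈ C_{w≥k+1}) such that the composite w_{≤k}x → x → y is zero; (3) for every t ∈ C_{w≤k} and every morphism t → x, the composite t → x → y is zero. -/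
open CategoryTheory CategoryTheory.Limits CategoryTheory.Pretriangulated

universe v u

/-- A weight structure on a pretriangulated category `C`. -/
structure WeightStructure (C : Type u) [Category.{v} C] [HasZeroObject C]
    [Preadditive C] [HasShift C ℤ] [∀ n : ℤ, (shiftFunctor C n).Additive]
    [Pretriangulated C] where
  le : Set C
  ge : Set C
  le_retract : ∀ ⦃x y : C⦄, y ∈ le →
    (∃ (i : x ⟶ y) (r : y ⟶ x), i ≫ r = 𝟙 x) → x ∈ le
  ge_retract : ∀ ⦃x y : C⦄, y ∈ ge →
    (∃ (i : x ⟶ y) (r : y ⟶ x), i ≫ r = 𝟙 x) → x ∈ ge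
  ge_shift : ∀ x ∈ ge, x⟦(1 : ℤ)⟧ ∈ ge
  le_shift : ∀ x ∈ le, x⟦(-1 : ℤ)⟧ ∈ le
  orth : ∀ x ∈ le, ∀ y ∈ ge, ∀ n : ℤ, 1 ≤ n → ∀ f : x ⟶ y⟦(-n : ℤ)⟧, f = 0
  decomp : ∀ x : C, ∃ (a b : C) (f : a ⟶ x) (g : x ⟶ b) (h : b ⟶ a⟦(1 : ℤ)⟧),
    a ∈ le ∧ b⟦(-1 : ℤ)⟧ ∈ ge ∧ Triangle.mk f g h ∈ distTriang C

variable {C : Type u} [Category.{v} C] [HasZeroObject C] [Preadditive C]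
  [HasShift C ℤ] [∀ n : ℤ, (shiftFunctor C n).Additive] [Pretriangulated C]

/-- `C_{w≤k} = Σᵏ C_{w≤0}`. -/
def WeightStructure.leN (W : WeightStructure C) (k : ℤ) : Set C :=
  {x : C | x⟦(-k : ℤ)⟧ ∈ W.le}

/-- `C_{w≥k} = Σᵏ C_{w≥0}`. -/
def WeightStructure.geN (W : WeightStructure C) (k : ℤ) : Set C :=
  {x : C | x⟦(-k : ℤ)⟧ ∈ W.ge}

/-!
(1) ⇒ (3) is orthogonality: a morphism from `C_{w≤k}` to `C_{w≥k+1}` vanishes.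
(2) ⇒ (1): `Hom(-, y)` is exact on the triangle `w_{≤k}x → x → w_{≥k+1}x`, so a map
killing `w_{≤k}x` factors through `w_{≥k+1}x`. (3) ⇒ (2): take any weight decomposition,
obtained by shifting one of `x⟦-k⟧` by `k`.
-/

lemma CategoryTheory.Pretriangulated.distinguished_mk_comp_iso {T : Triangle C}
    (hT : T ∈ distTriang C) {X : C} (e : T.obj₂ ≅ X) :
    Triangle.mk (T.mor₁ ≫ e.hom) (e.inv ≫ T.mor₂) T.mor₃ ∈ distTriang C :=
  isomorphic_distinguished _ hT _
    (Triangle.isoMk _ _ (Iso.refl _) e.symm (Iso.refl _)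
      (by simp [Triangle.mk]) (by simp [Triangle.mk]) (by simp [Triangle.mk]))

namespace WeightStructure

variable (W : WeightStructure C)

lemma mem_le_of_iso {x y : C} (e : x ≅ y) (hy : y ∈ W.le) : x ∈ W.le :=
  W.le_retract hy ⟨e.hom, e.inv, e.hom_inv_id⟩

lemma mem_ge_of_iso {x y : C} (e : x ≅ y) (hy : y ∈ W.ge) : x ∈ W.ge :=
  W.ge_retract hy ⟨e.hom, e.inv, e.hom_inv_id⟩

lemma shift_mem_leN {x : C} (hx : x ∈ W.le) (k : ℤ) : x⟦k⟧ ∈ W.leN k :=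
  W.mem_le_of_iso ((shiftFunctorCompIsoId C k (-k) (by ring)).app x) hx

lemma shift_mem_geN_add_one {x : C} (hx : x⟦(-1 : ℤ)⟧ ∈ W.ge) (k : ℤ) :
    x⟦k⟧ ∈ W.geN (k + 1) :=
  W.mem_ge_of_iso ((shiftFunctorAdd' C k (-(k + 1)) (-1) (by ring)).app x).symm hx

lemma geN_add_one_subset (n : ℤ) : W.geN (n + 1) ⊆ W.geN n := fun x hx =>
  W.mem_ge_of_iso ((shiftFunctorAdd' C (-(n + 1)) 1 (-n) (by ring)).app x) (W.ge_shift _ hx)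

lemma hom_eq_zero_of_mem_leN_of_mem_geN {k : ℤ} {t x : C} (ht : t ∈ W.leN k)
    (hx : x ∈ W.geN (k + 1)) (g : t ⟶ x) : g = 0 := by
  have hx' : x⟦-(k - 1)⟧ ∈ W.ge :=
    W.geN_add_one_subset (k - 1) (by simpa using W.geN_add_one_subset k hx)
  -- `x⟦-k⟧ ≅ x⟦-(k - 1)⟧⟦-1⟧`, so orthogonality applies to `g⟦-k⟧'`.
  let e : x⟦-k⟧ ≅ x⟦-(k - 1)⟧⟦-(1 : ℤ)⟧ :=
    (shiftFunctorAdd' C (-(k - 1)) (-1) (-k) (by ring)).app x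
  have hshift : g⟦-k⟧' ≫ e.hom = 0 := W.orth _ ht _ hx' 1 le_rfl _
  rwa [Preadditive.IsIso.comp_right_eq_zero, Functor.map_eq_zero_iff] at hshift

lemma exists_distTriang_mem_leN_mem_geN (x : C) (k : ℤ) :
    ∃ (a b : C) (α : a ⟶ x) (β : x ⟶ b) (γ : b ⟶ a⟦(1 : ℤ)⟧),
      a ∈ W.leN k ∧ b ∈ W.geN (k + 1) ∧ Triangle.mk α β γ ∈ distTriang C := by
  obtain ⟨a, b, α, β, γ, ha, hb, hT⟩ := W.decomp (x⟦-k⟧)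
  let T := (Triangle.shiftFunctor C k).obj (Triangle.mk α β γ)
  exact ⟨_, _, _, _, _, W.shift_mem_leN ha k, W.shift_mem_geN_add_one hb k,
    distinguished_mk_comp_iso (T := T) (Triangle.shift_distinguished _ hT k)
      ((shiftFunctorCompIsoId C (-k) k (by ring)).app x)⟩

end WeightStructure

/-- Characterizations of morphisms killing weights `≤ k`: (1) factoring through
an object of `C_{w≥k+1}`; (2) vanishing of the composite `w_{≤k}x → x → y` for
some weight decomposition of `x`; (3) vanishing of all composites `t → x → y`
with `t ∈ C_{w≤k}`. -/
theorem kills_weights_le_iff (W : WeightStructure C) {x y : C} (f : x ⟶ y)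
    (k : ℤ) :
    ((∃ (x' : C) (_ : x' ∈ W.geN (k + 1)) (g : x ⟶ x') (h : x' ⟶ y),
        g ≫ h = f) ↔
      (∃ (a b : C) (α : a ⟶ x) (β : x ⟶ b) (γ : b ⟶ a⟦(1 : ℤ)⟧),
        a ∈ W.leN k ∧ b ∈ W.geN (k + 1) ∧
          (Triangle.mk α β γ ∈ distTriang C) ∧ α ≫ f = 0)) ∧
    ((∃ (a b : C) (α : a ⟶ x) (β : x ⟶ b) (γ : b ⟶ a⟦(1 : ℤ)⟧),
        a ∈ W.leN k ∧ b ∈ W.geN (k + 1) ∧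
          (Triangle.mk α β γ ∈ distTriang C) ∧ α ≫ f = 0) ↔
      (∀ t ∈ W.leN k, ∀ g : t ⟶ x, g ≫ f = 0)) := by
  have factors_imp_kills :
      (∃ (x' : C) (_ : x' ∈ W.geN (k + 1)) (g : x ⟶ x') (h : x' ⟶ y), g ≫ h = f) →
        ∀ t ∈ W.leN k, ∀ g : t ⟶ x, g ≫ f = 0 := by
    rintro ⟨x', hx', g, h, rfl⟩ t ht u
    rw [← Category.assoc, W.hom_eq_zero_of_mem_leN_of_mem_geN ht hx' (u ≫ g), zero_comp]
  have decomp_imp_factors :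
      (∃ (a b : C) (α : a ⟶ x) (β : x ⟶ b) (γ : b ⟶ a⟦(1 : ℤ)⟧), a ∈ W.leN k ∧
        b ∈ W.geN (k + 1) ∧ (Triangle.mk α β γ ∈ distTriang C) ∧ α ≫ f = 0) →
        ∃ (x' : C) (_ : x' ∈ W.geN (k + 1)) (g : x ⟶ x') (h : x' ⟶ y), g ≫ h = f := by
    rintro ⟨a, b, α, β, γ, -, hb, hT, hαf⟩
    obtain ⟨h, hh⟩ := Triangle.yoneda_exact₂ _ hT f hαf
    exact ⟨b, hb, β, h, hh.symm⟩
  have kills_imp_decomp : (∀ t ∈ W.leN k, ∀ g : t ⟶ x, g ≫ f = 0) →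
      ∃ (a b : C) (α : a ⟶ x) (β : x ⟶ b) (γ : b ⟶ a⟦(1 : ℤ)⟧), a ∈ W.leN k ∧
        b ∈ W.geN (k + 1) ∧ (Triangle.mk α β γ ∈ distTriang C) ∧ α ≫ f = 0 := by
    intro hkills
    obtain ⟨a, b, α, β, γ, ha, hb, hT⟩ := W.exists_distTriang_mem_leN_mem_geN x k
    exact ⟨a, b, α, β, γ, ha, hb, hT, hkills a ha α⟩
  exact ⟨⟨fun h => kills_imp_decomp (factors_imp_kills h), decomp_imp_factors⟩,
    ⟨fun h => factors_imp_kills (decomp_imp_factors h), kills_imp_decomp⟩⟩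
end
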